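/- Let (f₁,…,f_N; p₁,…,p_N) be an admissible iterated function system with constants ε, α, δ, M = ε^{-α} as in the basic estimates, and let a ∈ (0,1/2) satisfy M < a^{-α}/6. With ε_n = (1−δ)^{⌊n^{1/4}⌋/2} and J = [a, 1−a], there exists n₀ ∈ ℕ such that for every n ≥ n₀: ℙ({ i ∈ Σ : f_i^{⌊n^{1/4}⌋}([ε_n, 1−ε_n]) ⊆ J }) ≥ 1/5. -/

import Mathlib

open Set MeasureTheory Finset Filter

/-- An admissible iterated function system on `[0,1]`: increasing homeomorphisms of
`[0,1]` fixing the endpoints, `C¹` near the endpoints with positive derivatives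
`d i` at `0` and `e i` at `1`, positive probabilities, positive Lyapunov exponents at
both endpoints, and at every interior point some map moves it left and some right. -/
structure AdmissibleIFS (N : ℕ) (f : Fin N → ℝ → ℝ) (p d e : Fin N → ℝ) : Prop where
  meas : ∀ i, Measurable (f i)
  mono : ∀ i, StrictMonoOn (f i) (Icc 0 1)
  maps : ∀ i, MapsTo (f i) (Icc 0 1) (Icc 0 1)
  cont : ∀ i, ContinuousOn (f i) (Icc 0 1)
  surj : ∀ i, SurjOn (f i) (Icc 0 1) (Icc 0 1)
  fix0 : ∀ i, f i 0 = 0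
  fix1 : ∀ i, f i 1 = 1
  ppos : ∀ i, 0 < p i
  psum : ∑ i, p i = 1
  c1 : ∀ i, ∃ η > (0:ℝ), ContDiffOn ℝ 1 (f i) (Icc 0 η) ∧ ContDiffOn ℝ 1 (f i) (Icc (1 - η) 1)
  deriv0 : ∀ i, HasDerivWithinAt (f i) (d i) (Icc 0 1) 0
  deriv1 : ∀ i, HasDerivWithinAt (f i) (e i) (Icc 0 1) 1
  dpos : ∀ i, 0 < d i
  epos : ∀ i, 0 < e i
  lyap0 : 0 < ∑ i, p i * Real.log (d i)
  lyap1 : 0 < ∑ i, p i * Real.log (e i)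
  interior : ∀ x ∈ Ioo (0:ℝ) 1, (∃ i, f i x < x) ∧ (∃ j, x < f j x)

/-- Iterates along a sequence of indices: `wordIter f ω n = f_{ω (n-1)} ∘ ⋯ ∘ f_{ω 0}`. -/
def wordIter {N : ℕ} (f : Fin N → ℝ → ℝ) (ω : ℕ → Fin N) : ℕ → ℝ → ℝ
  | 0 => id
  | n + 1 => f (ω n) ∘ wordIter f ω n

/-- `⌊n^{1/4}⌋`. -/
noncomputable def nroot4 (n : ℕ) : ℕ := ⌊(n : ℝ) ^ ((1 : ℝ) / 4)⌋₊


/-!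
The maps are increasing, so `[ε_n, 1 - ε_n]` misses `J` only if the orbit of `ε_n` ends below `a`
or the orbit of `1 - ε_n` ends above `1 - a`, and the second event is the first one for the
reflected system `y ↦ 1 - f_i (1 - y)`. An orbit of `ε_n` ending below `a` either never reaches
`[ε, 1]`, which has probability at most `(1-δ)^{α⌊n^{1/4}⌋/2} < 1/10` for large `n`, or reaches it
and later lies below `a`. By induction on the time `m`, the probability of having reached `[ε, 1]`
and lying in `[0, t]` at time `m` is at most `M t^α`: this is trivial for `t ≥ ε`, and for `t < ε`
the escape happened before time `m`, so by independence of the `m`-th letter the probability is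
bounded by the Markov operator applied to the law at time `m - 1` (with the orbits that have not
escaped parked at `1`), a law that lies in `P⁻_{M,α}` by induction. So each bad event has
probability below `1/10 + 1/6`, and the good one at least `1 - 2 (1/10 + 1/6) > 1/5`.
-/

open scoped ENNReal

section WordIter

variable {N : ℕ} {f : Fin N → ℝ → ℝ}

theorem wordIter_succ_apply (ω : ℕ → Fin N) (m : ℕ) (x : ℝ) :
    wordIter f ω (m + 1) x = f (ω m) (wordIter f ω m x) := rfl

theorem dependsOn_wordIter (m : ℕ) (x : ℝ) :
    DependsOn (fun ω => wordIter f ω m x) (Set.Iio m) := by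
  induction m with
  | zero => exact fun _ _ _ => rfl
  | succ m ih =>
    intro ω ω' h
    have hm : ω m = ω' m := h m (Set.mem_Iio.2 m.lt_succ_self)
    have hlt := ih fun k hk => h k (Set.mem_Iio.2 ((Set.mem_Iio.1 hk).trans m.lt_succ_self))
    simp only [wordIter_succ_apply] at hlt ⊢
    rw [hm, hlt]

theorem wordIter_mem_Icc (hf : ∀ i, MapsTo (f i) (Icc 0 1) (Icc 0 1)) (ω : ℕ → Fin N)
    (m : ℕ) {x : ℝ} (hx : x ∈ Icc (0:ℝ) 1) : wordIter f ω m x ∈ Icc (0:ℝ) 1 := by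
  induction m with
  | zero => exact hx
  | succ m ih => exact hf _ ih

theorem monotoneOn_wordIter (hf : ∀ i, MapsTo (f i) (Icc 0 1) (Icc 0 1))
    (hmono : ∀ i, MonotoneOn (f i) (Icc 0 1)) (ω : ℕ → Fin N) (m : ℕ) :
    MonotoneOn (wordIter f ω m) (Icc 0 1) := by
  intro x hx y hy hxy
  induction m with
  | zero => exact hxy
  | succ m ih =>
    exact hmono _ (wordIter_mem_Icc hf ω m hx) (wordIter_mem_Icc hf ω m hy) ih

theorem wordIter_reflect (ω : ℕ → Fin N) (m : ℕ) (x : ℝ) :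
    wordIter (fun i y => 1 - f i (1 - y)) ω m x = 1 - wordIter f ω m (1 - x) := by
  induction m with
  | zero => simp [wordIter]
  | succ m ih => simp only [wordIter_succ_apply, ih, sub_sub_cancel]

theorem mapsTo_Icc_reflect {g : ℝ → ℝ} (hg : MapsTo g (Icc 0 1) (Icc 0 1)) :
    MapsTo (fun y => 1 - g (1 - y)) (Icc 0 1) (Icc 0 1) := fun y hy => by
  have := hg ⟨sub_nonneg.2 hy.2, sub_le_self 1 hy.1⟩
  exact ⟨sub_nonneg.2 this.2, sub_le_self 1 this.1⟩

end WordIter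

section Cylinder

variable {N m : ℕ}

theorem DependsOn.preimage_image_restrict_eq {A : Set (ℕ → Fin N)}
    (hA : DependsOn (· ∈ A) (Set.Iio m)) :
    (fun ω (k : Fin m) => ω k) ⁻¹' ((fun ω (k : Fin m) => ω k) '' A) = A := by
  ext ω
  refine ⟨fun ⟨ω', hω', he⟩ => ?_, fun h => ⟨ω, h, rfl⟩⟩
  exact (hA fun k hk => congrFun he ⟨k, hk⟩).mp hω'

theorem measurable_restrict_fin : Measurable fun (ω : ℕ → Fin N) (k : Fin m) => ω k :=
  measurable_pi_lambda _ fun _ => measurable_pi_apply _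

theorem MeasurableSet.of_dependsOn {A : Set (ℕ → Fin N)}
    (hA : DependsOn (· ∈ A) (Set.Iio m)) : MeasurableSet A :=
  hA.preimage_image_restrict_eq ▸ measurable_restrict_fin MeasurableSet.of_discrete

theorem Measurable.of_dependsOn {β : Type*} [MeasurableSpace β]
    {Y : (ℕ → Fin N) → β} (hY : DependsOn Y (Set.Iio m)) : Measurable Y :=
  fun _ _ => MeasurableSet.of_dependsOn (m := m) fun _ _ h => by simp only [Set.mem_preimage, hY h]

end Cylinder

section IteratedFunctionSystem

variable {N : ℕ}

def IsBernoulliMeasure (p : Fin N → ℝ) (ℙ : Measure (ℕ → Fin N)) : Prop :=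
  ∀ m : ℕ, ℙ.map (fun ω (k : Fin m) => ω k)
    = Measure.pi (fun _ : Fin m => ∑ j, ENNReal.ofReal (p j) • Measure.dirac j)

noncomputable def markovOp (f : Fin N → ℝ → ℝ) (p : Fin N → ℝ) (μ : Measure ℝ) : Measure ℝ :=
  ∑ i, ENNReal.ofReal (p i) • μ.map (f i)

-- With `F x = M x^α` these say that the Markov operator preserves the classes `P^∓_{M,α}`.
def PreservesLowerTail (f : Fin N → ℝ → ℝ) (p : Fin N → ℝ) (F : ℝ → ℝ≥0∞) : Prop :=
  ∀ μ : Measure ℝ, IsProbabilityMeasure μ → μ (Icc (0:ℝ) 1)ᶜ = 0 →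
    (∀ x ∈ Icc (0:ℝ) 1, μ (Icc 0 x) ≤ F x) → ∀ x ∈ Icc (0:ℝ) 1, markovOp f p μ (Icc 0 x) ≤ F x

def PreservesUpperTail (f : Fin N → ℝ → ℝ) (p : Fin N → ℝ) (F : ℝ → ℝ≥0∞) : Prop :=
  ∀ μ : Measure ℝ, IsProbabilityMeasure μ → μ (Icc (0:ℝ) 1)ᶜ = 0 →
    (∀ x ∈ Icc (0:ℝ) 1, μ (Icc (1 - x) 1) ≤ F x) →
    ∀ x ∈ Icc (0:ℝ) 1, markovOp f p μ (Icc (1 - x) 1) ≤ F x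

theorem markovOp_apply {f : Fin N → ℝ → ℝ} (hf : ∀ i, Measurable (f i)) (p : Fin N → ℝ)
    (μ : Measure ℝ) {S : Set ℝ} (hS : MeasurableSet S) :
    markovOp f p μ S = ∑ i, ENNReal.ofReal (p i) * μ (f i ⁻¹' S) := by
  simp only [markovOp, Measure.finsetSum_apply, Measure.smul_apply, smul_eq_mul,
    Measure.map_apply (hf _) hS]

end IteratedFunctionSystem

section Bernoulli

variable {N : ℕ} {p : Fin N → ℝ} {ℙ : Measure (ℕ → Fin N)}

instance (p : Fin N → ℝ) : IsFiniteMeasure (∑ j, ENNReal.ofReal (p j) • Measure.dirac j) :=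
  ⟨by simp [Measure.finsetSum_apply, ENNReal.sum_lt_top]⟩

theorem IsBernoulliMeasure.measure_inter_eq_mul (hℙ : IsBernoulliMeasure p ℙ) {m : ℕ}
    {A : Set (ℕ → Fin N)} (hA : DependsOn (· ∈ A) (Set.Iio m)) (i : Fin N) :
    ℙ (A ∩ {ω | ω m = i}) = ENNReal.ofReal (p i) * ℙ A := by
  set S := (fun ω (k : Fin m) => ω k) '' A
  have hAS : A = (fun ω (k : Fin m) => ω k) ⁻¹' S := hA.preimage_image_restrict_eq.symm
  have hsplit : A ∩ {ω | ω m = i} = (fun ω (k : Fin (m + 1)) => ω k) ⁻¹'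
      (MeasurableEquiv.piFinSuccAbove (fun _ => Fin N) (Fin.last m) ⁻¹' ({i} ×ˢ S)) := by
    rw [hAS]
    ext ω
    simp only [mem_inter_iff, Set.mem_preimage, mem_ofPred_eq, and_comm,
      MeasurableEquiv.piFinSuccAbove, Fin.insertNthEquiv_last, MeasurableEquiv.coe_mk,
      Fin.snocEquiv_symm_apply, Fin.val_last, mem_prod, mem_singleton_iff, and_congr_right_iff]
    exact fun _ => Iff.rfl
  rw [hsplit, ← Measure.map_apply measurable_restrict_fin MeasurableSet.of_discrete, hℙ,
    (measurePreserving_piFinSuccAbove _ (Fin.last m)).measure_preimage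
      MeasurableSet.of_discrete.nullMeasurableSet, Measure.prod_prod, hAS,
    ← Measure.map_apply measurable_restrict_fin MeasurableSet.of_discrete, hℙ]
  simp [Measure.finsetSum_apply, Pi.single_apply]

theorem IsBernoulliMeasure.measure_setOf_mem_letter (hℙ : IsBernoulliMeasure p ℙ) {m : ℕ}
    {B : Fin N → Set (ℕ → Fin N)} (hB : ∀ i, DependsOn (· ∈ B i) (Set.Iio m)) :
    ℙ {ω | ω ∈ B (ω m)} = ∑ i, ENNReal.ofReal (p i) * ℙ (B i) := by
  have hunion : {ω | ω ∈ B (ω m)} = ⋃ i, B i ∩ {ω | ω m = i} := by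
    ext ω
    simp
  rw [hunion, measure_iUnion, tsum_fintype]
  · exact Finset.sum_congr rfl fun i _ => hℙ.measure_inter_eq_mul (hB i) i
  · exact fun i j hij => Disjoint.mono inf_le_right inf_le_right
      (Set.disjoint_left.2 fun ω hi hj => hij (hi.symm.trans hj))
  · exact fun i => (MeasurableSet.of_dependsOn (hB i)).inter
      (measurableSet_eq_fun (measurable_pi_apply m) measurable_const)

end Bernoulli

section Escape

variable {N : ℕ} {f : Fin N → ℝ → ℝ} {p : Fin N → ℝ} {ℙ : Measure (ℕ → Fin N)}
  {F : ℝ → ℝ≥0∞} {ε x : ℝ}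

def escapeSet (f : Fin N → ℝ → ℝ) (ε x : ℝ) (m : ℕ) : Set (ℕ → Fin N) :=
  {ω | ∃ j, 1 ≤ j ∧ j ≤ m ∧ ε ≤ wordIter f ω j x}

open Classical in
noncomputable def parkedIter (f : Fin N → ℝ → ℝ) (ε x : ℝ) (m : ℕ) (ω : ℕ → Fin N) : ℝ :=
  if ω ∈ escapeSet f ε x m then wordIter f ω m x else 1

theorem dependsOn_parkedIter (m : ℕ) : DependsOn (parkedIter f ε x m) (Set.Iio m) := by
  intro ω ω' h
  have hW : ∀ j ≤ m, wordIter f ω j x = wordIter f ω' j x := fun j hj =>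
    (dependsOn_wordIter j x).mono (Set.Iio_subset_Iio hj) h
  have hE : ω ∈ escapeSet f ε x m ↔ ω' ∈ escapeSet f ε x m :=
    exists_congr fun j => and_congr_right fun _ => and_congr_right fun hj => by rw [hW j hj]
  classical
  simp only [parkedIter, hW m le_rfl]
  exact if_congr hE rfl rfl

theorem parkedIter_mem_Icc (hmaps : ∀ i, MapsTo (f i) (Icc 0 1) (Icc 0 1))
    (hx : x ∈ Icc (0:ℝ) 1) (m : ℕ) (ω : ℕ → Fin N) : parkedIter f ε x m ω ∈ Icc (0:ℝ) 1 := by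
  unfold parkedIter
  split_ifs
  · exact wordIter_mem_Icc hmaps ω m hx
  · exact ⟨zero_le_one, le_rfl⟩

theorem measure_escapeSet_succ_inter_le (hf : ∀ i, Measurable (f i))
    (hmaps : ∀ i, MapsTo (f i) (Icc 0 1) (Icc 0 1)) (hℙ : IsBernoulliMeasure p ℙ)
    (hx : x ∈ Icc (0:ℝ) 1) (m : ℕ) {t : ℝ} (htε : t < ε) :
    ℙ (escapeSet f ε x (m + 1) ∩ {ω | wordIter f ω (m + 1) x ≤ t})
      ≤ markovOp f p (ℙ.map (parkedIter f ε x m)) (Icc 0 t) := by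
  have hY := Measurable.of_dependsOn (dependsOn_parkedIter (f := f) (ε := ε) (x := x) m)
  have hsub : escapeSet f ε x (m + 1) ∩ {ω | wordIter f ω (m + 1) x ≤ t}
      ⊆ {ω | ω ∈ parkedIter f ε x m ⁻¹' (f (ω m) ⁻¹' Icc 0 t)} := by
    rintro ω ⟨⟨j, hj1, hjm, hjε⟩, hle⟩
    have hj : j ≤ m := by
      by_contra! h
      obtain rfl : j = m + 1 := by omega
      exact absurd (hjε.trans hle) htε.not_ge
    change f (ω m) (parkedIter f ε x m ω) ∈ Icc 0 t
    rw [parkedIter, if_pos ⟨j, hj1, hj, hjε⟩]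
    exact ⟨(wordIter_mem_Icc hmaps ω (m + 1) hx).1, hle⟩
  calc _ ≤ _ := measure_mono hsub
    _ = ∑ i, ENNReal.ofReal (p i) * ℙ.map (parkedIter f ε x m) (f i ⁻¹' Icc 0 t) := by
      rw [hℙ.measure_setOf_mem_letter (B := fun i => parkedIter f ε x m ⁻¹' (f i ⁻¹' Icc 0 t))
        fun i _ _ h => by simp only [Set.mem_preimage, dependsOn_parkedIter m h]]
      simp only [Measure.map_apply hY (hf _ measurableSet_Icc)]
    _ = _ := (markovOp_apply hf p _ measurableSet_Icc).symm

theorem measure_escapeSet_inter_le [IsProbabilityMeasure ℙ] (hf : ∀ i, Measurable (f i))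
    (hmaps : ∀ i, MapsTo (f i) (Icc 0 1) (Icc 0 1)) (hℙ : IsBernoulliMeasure p ℙ)
    (hclass : PreservesLowerTail f p F) (hε : ε ≤ 1) (hF : ∀ t, ε ≤ t → 1 ≤ F t)
    (hx : x ∈ Icc (0:ℝ) 1) (m : ℕ) {t : ℝ} (ht : t ∈ Icc (0:ℝ) 1) :
    ℙ (escapeSet f ε x m ∩ {ω | wordIter f ω m x ≤ t}) ≤ F t := by
  induction m generalizing t with
  | zero => simp [escapeSet]
  | succ m ih =>
    rcases le_or_gt ε t with htε | htε
    · exact prob_le_one.trans (hF t htε)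
    have hY := Measurable.of_dependsOn (dependsOn_parkedIter (f := f) (ε := ε) (x := x) m)
    have hsupp : ℙ.map (parkedIter f ε x m) (Icc (0:ℝ) 1)ᶜ = 0 := by
      have hpre : parkedIter f ε x m ⁻¹' Icc 0 1 = univ :=
        eq_univ_of_forall (parkedIter_mem_Icc hmaps hx m)
      rw [Measure.map_apply hY measurableSet_Icc.compl, Set.preimage_compl, hpre, compl_univ,
        measure_empty]
    have htail : ∀ s ∈ Icc (0:ℝ) 1, ℙ.map (parkedIter f ε x m) (Icc 0 s) ≤ F s := by
      intro s hs
      rcases hs.2.eq_or_lt with rfl | hs1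
      · exact prob_le_one.trans (hF 1 hε)
      rw [Measure.map_apply hY measurableSet_Icc]
      refine (measure_mono fun ω hω => ?_).trans (ih hs)
      by_cases hωE : ω ∈ escapeSet f ε x m
      · simp only [Set.mem_preimage, parkedIter, if_pos hωE] at hω
        exact ⟨hωE, hω.2⟩
      · simp only [Set.mem_preimage, parkedIter, if_neg hωE] at hω
        exact absurd hω.2 hs1.not_ge
    exact (measure_escapeSet_succ_inter_le hf hmaps hℙ hx m htε).trans <|
      hclass _ (Measure.isProbabilityMeasure_map hY.aemeasurable) hsupp htail t ht

theorem measure_wordIter_lt_le [IsProbabilityMeasure ℙ] (hf : ∀ i, Measurable (f i))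
    (hmaps : ∀ i, MapsTo (f i) (Icc 0 1) (Icc 0 1)) (hℙ : IsBernoulliMeasure p ℙ)
    (hclass : PreservesLowerTail f p F) (hε : ε ≤ 1) (hF : ∀ t, ε ≤ t → 1 ≤ F t)
    (hx : x ∈ Icc (0:ℝ) 1) (k : ℕ) {a : ℝ} (ha : a ∈ Icc (0:ℝ) 1) :
    ℙ {ω | wordIter f ω k x < a}
      ≤ ℙ {ω | ∀ j, 1 ≤ j → j ≤ k → wordIter f ω j x < ε} + F a := by
  have hsub : {ω | wordIter f ω k x < a} ⊆ {ω | ∀ j, 1 ≤ j → j ≤ k → wordIter f ω j x < ε} ∪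
      (escapeSet f ε x k ∩ {ω | wordIter f ω k x ≤ a}) := by
    intro ω hω
    by_cases hstay : ∀ j, 1 ≤ j → j ≤ k → wordIter f ω j x < ε
    · exact Or.inl hstay
    · push Not at hstay
      exact Or.inr ⟨hstay, le_of_lt (show wordIter f ω k x < a from hω)⟩
  exact (measure_mono hsub).trans <| (measure_union_le _ _).trans <|
    add_le_add_right (measure_escapeSet_inter_le hf hmaps hℙ hclass hε hF hx k ha) _

end Escape

theorem PreservesUpperTail.reflect {N : ℕ} {f : Fin N → ℝ → ℝ} {p : Fin N → ℝ}
    {F : ℝ → ℝ≥0∞} (hf : ∀ i, Measurable (f i)) (hclass : PreservesUpperTail f p F) :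
    PreservesLowerTail (fun i y => 1 - f i (1 - y)) p F := by
  intro ν hν hsupp htail x hx
  have hρ : Measurable fun y : ℝ => 1 - y := measurable_const.sub measurable_id
  have hg : ∀ i, Measurable fun y => 1 - f i (1 - y) := fun i =>
    measurable_const.sub ((hf i).comp hρ)
  have hpre : ∀ a b : ℝ, (fun y : ℝ => 1 - y) ⁻¹' Icc a b = Icc (1 - b) (1 - a) := by
    intro a b
    ext y
    simp only [Set.mem_preimage, Set.mem_Icc]
    constructor <;> rintro ⟨h1, h2⟩ <;> constructor <;> linarith
  set μ := ν.map fun y => 1 - y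
  have hμsupp : μ (Icc (0:ℝ) 1)ᶜ = 0 := by
    rwa [Measure.map_apply hρ measurableSet_Icc.compl, Set.preimage_compl, hpre, sub_self,
      sub_zero]
  have hμtail : ∀ s ∈ Icc (0:ℝ) 1, μ (Icc (1 - s) 1) ≤ F s := fun s hs => by
    rw [Measure.map_apply hρ measurableSet_Icc, hpre, sub_self, sub_sub_cancel]
    exact htail s hs
  convert hclass μ (Measure.isProbabilityMeasure_map hρ.aemeasurable) hμsupp hμtail x hx using 1
  rw [markovOp_apply hg p ν measurableSet_Icc, markovOp_apply hf p μ measurableSet_Icc]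
  refine Finset.sum_congr rfl fun i _ => ?_
  rw [Measure.map_apply hρ (hf i measurableSet_Icc)]
  congr 2
  ext y
  simp only [Set.mem_preimage, Set.mem_Icc]
  constructor <;> rintro ⟨h1, h2⟩ <;> constructor <;> linarith

theorem one_le_measure_image_subset_add {Ω : Type*} [MeasurableSpace Ω] (ℙ : Measure Ω)
    [IsProbabilityMeasure ℙ] {g : Ω → ℝ → ℝ} {x y a b : ℝ}
    (hg : ∀ ω, MonotoneOn (g ω) (Icc x y)) :
    1 ≤ ℙ {ω | g ω '' Icc x y ⊆ Icc a b} + (ℙ {ω | g ω x < a} + ℙ {ω | b < g ω y}) := by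
  have hcover : univ ⊆ {ω | g ω '' Icc x y ⊆ Icc a b} ∪
      ({ω | g ω x < a} ∪ {ω | b < g ω y}) := by
    rintro ω -
    by_contra! hω
    simp only [mem_union, mem_ofPred_eq, not_or, not_lt] at hω
    obtain ⟨hgood, hlow, hhigh⟩ := hω
    refine hgood ?_
    rintro _ ⟨z, hz, rfl⟩
    have hxy : x ≤ y := hz.1.trans hz.2
    exact ⟨hlow.trans (hg ω ⟨le_rfl, hxy⟩ hz hz.1), (hg ω hz ⟨hxy, le_rfl⟩ hz.2).trans hhigh⟩
  calc 1 = ℙ univ := measure_univ.symm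
    _ ≤ _ := (measure_mono hcover).trans <| (measure_union_le _ _).trans <|
      add_le_add_right (measure_union_le _ _) _

theorem ofReal_one_sub_le_measure_image_subset {N : ℕ} {f : Fin N → ℝ → ℝ} {p : Fin N → ℝ}
    {ℙ : Measure (ℕ → Fin N)} [IsProbabilityMeasure ℙ] {F : ℝ → ℝ≥0∞} {ε x a r q : ℝ}
    (hf : ∀ i, Measurable (f i)) (hmaps : ∀ i, MapsTo (f i) (Icc 0 1) (Icc 0 1))
    (hmono : ∀ i, MonotoneOn (f i) (Icc 0 1)) (hℙ : IsBernoulliMeasure p ℙ)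
    (hclass : PreservesLowerTail f p F) (hclass' : PreservesUpperTail f p F)
    (hε : ε ≤ 1) (hF : ∀ t, ε ≤ t → 1 ≤ F t) (hx : x ∈ Icc (0:ℝ) 1) (k : ℕ)
    (ha : a ∈ Icc (0:ℝ) 1) (hr : 0 ≤ r) (hq : 0 ≤ q) (hFa : F a ≤ ENNReal.ofReal q)
    (hstay : ℙ {ω | ∀ j, 1 ≤ j → j ≤ k → wordIter f ω j x < ε} ≤ ENNReal.ofReal r)
    (hstay' : ℙ {ω | ∀ j, 1 ≤ j → j ≤ k → 1 - ε < wordIter f ω j (1 - x)} ≤ ENNReal.ofReal r) :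
    ENNReal.ofReal (1 - 2 * (r + q))
      ≤ ℙ {ω | wordIter f ω k '' Icc x (1 - x) ⊆ Icc a (1 - a)} := by
  have hx' : 1 - x ∈ Icc (0:ℝ) 1 := ⟨sub_nonneg.2 hx.2, sub_le_self 1 hx.1⟩
  have hlow : ℙ {ω | wordIter f ω k x < a} ≤ ENNReal.ofReal r + ENNReal.ofReal q :=
    (measure_wordIter_lt_le hf hmaps hℙ hclass hε hF hx k ha).trans (add_le_add hstay hFa)
  have hup : ℙ {ω | 1 - a < wordIter f ω k (1 - x)} ≤ ENNReal.ofReal r + ENNReal.ofReal q := by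
    have hrefl := measure_wordIter_lt_le (f := fun i y => 1 - f i (1 - y))
      (fun i => measurable_const.sub ((hf i).comp (measurable_const.sub measurable_id)))
      (fun i => mapsTo_Icc_reflect (hmaps i)) hℙ (hclass'.reflect hf) hε hF hx k ha
    simp only [wordIter_reflect, sub_lt_comm] at hrefl
    exact hrefl.trans (add_le_add hstay' hFa)
  have hcover := one_le_measure_image_subset_add ℙ (g := fun ω => wordIter f ω k) (a := a)
    (b := 1 - a) fun ω => (monotoneOn_wordIter hmaps hmono ω k).mono (Icc_subset_Icc hx.1 hx'.2)
  have hbad : ℙ {ω | wordIter f ω k x < a} + ℙ {ω | 1 - a < wordIter f ω k (1 - x)}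
      ≤ ENNReal.ofReal (2 * (r + q)) := by
    refine (add_le_add hlow hup).trans_eq ?_
    rw [← ENNReal.ofReal_add hr hq, ← ENNReal.ofReal_add (by positivity) (by positivity), two_mul]
  calc ENNReal.ofReal (1 - 2 * (r + q)) = 1 - ENNReal.ofReal (2 * (r + q)) := by
        rw [ENNReal.ofReal_sub _ (by positivity), ENNReal.ofReal_one]
    _ ≤ 1 - _ := tsub_le_tsub_left hbad 1
    _ ≤ _ := tsub_le_iff_right.2 hcover

theorem one_le_rpow_neg_mul_rpow {ε α t : ℝ} (hε : 0 < ε) (hα : 0 ≤ α) (ht : ε ≤ t) :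
    1 ≤ ε ^ (-α) * t ^ α := by
  rw [Real.rpow_neg hε.le, ← div_eq_inv_mul, one_le_div (Real.rpow_pos_of_pos hε α)]
  exact Real.rpow_le_rpow hε.le ht hα

theorem tendsto_nroot4_atTop : Tendsto (fun n => (nroot4 n : ℝ)) atTop atTop :=
  tendsto_natCast_atTop_atTop.comp <| tendsto_nat_floor_atTop.comp <|
    (tendsto_rpow_atTop (by norm_num)).comp tendsto_natCast_atTop_atTop

/-- (Lemma `return_to_J`.) With `ε_n = (1-δ)^{⌊n^{1/4}⌋/2}` and
`J = [a, 1-a]`, for all sufficiently large `n` the probability that the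
`⌊n^{1/4}⌋`-th iterate maps `[ε_n, 1-ε_n]` into `J` is at least `1/5`. -/
theorem stmt15 (N : ℕ) (f : Fin N → ℝ → ℝ) (p d e : Fin N → ℝ)
    (hadm : AdmissibleIFS N f p d e)
    (ε α δ M a : ℝ)
    (hε : ε ∈ Ioo (0:ℝ) (1/2)) (hα : α ∈ Ioo (0:ℝ) 1) (hδ : δ ∈ Ioo (0:ℝ) 1)
    (hM : M = ε ^ (-α)) (ha : a ∈ Ioo (0:ℝ) (1/2)) (hMa : M < a ^ (-α) / 6)
    -- the Markov operator preserves the class `P⁻_{M,α}` (and symmetrically `P⁺_{M,α}`)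
    (hclass : ∀ μ : Measure ℝ, IsProbabilityMeasure μ → μ (Icc (0:ℝ) 1)ᶜ = 0 →
      (∀ x ∈ Icc (0:ℝ) 1, μ (Icc 0 x) ≤ ENNReal.ofReal (M * x ^ α)) →
      ∀ x ∈ Icc (0:ℝ) 1,
        (∑ i, ENNReal.ofReal (p i) • Measure.map (f i) μ) (Icc 0 x)
          ≤ ENNReal.ofReal (M * x ^ α))
    (hclass' : ∀ μ : Measure ℝ, IsProbabilityMeasure μ → μ (Icc (0:ℝ) 1)ᶜ = 0 →
      (∀ x ∈ Icc (0:ℝ) 1, μ (Icc (1 - x) 1) ≤ ENNReal.ofReal (M * x ^ α)) →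
      ∀ x ∈ Icc (0:ℝ) 1,
        (∑ i, ENNReal.ofReal (p i) • Measure.map (f i) μ) (Icc (1 - x) 1)
          ≤ ENNReal.ofReal (M * x ^ α))
    -- `ℙ` is the product measure on `Σ = {1,…,N}^ℕ` with marginals `p`
    (ℙ : Measure (ℕ → Fin N)) (hPprob : IsProbabilityMeasure ℙ)
    (hcyl : ∀ m : ℕ, ℙ.map (fun ω (k : Fin m) => ω k)
      = Measure.pi (fun _ : Fin m => ∑ j, ENNReal.ofReal (p j) • Measure.dirac j))
    -- the probability bounds on `⋂_{j=1}^{⌊n^{1/4}⌋} A_{x,j}(ε)` and `A^{x,j}(ε)`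
    (hA0 : ∀ n : ℕ, ∀ x ∈ Icc ((1 - δ) ^ ((nroot4 n : ℝ) / 2)) ε,
      ℙ {ω | ∀ j : ℕ, 1 ≤ j → j ≤ nroot4 n → wordIter f ω j x < ε}
        ≤ ENNReal.ofReal ((1 - δ) ^ (α * (nroot4 n : ℝ) / 2)))
    (hA1 : ∀ n : ℕ, ∀ x ∈ Icc (1 - ε) (1 - (1 - δ) ^ ((nroot4 n : ℝ) / 2)),
      ℙ {ω | ∀ j : ℕ, 1 ≤ j → j ≤ nroot4 n → 1 - ε < wordIter f ω j x}
        ≤ ENNReal.ofReal ((1 - δ) ^ (α * (nroot4 n : ℝ) / 2))) :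
    ∃ n₀ : ℕ, ∀ n : ℕ, n₀ ≤ n →
      ENNReal.ofReal (1 / 5)
        ≤ ℙ {ω | wordIter f ω (nroot4 n) ''
              Icc ((1 - δ) ^ ((nroot4 n : ℝ) / 2)) (1 - (1 - δ) ^ ((nroot4 n : ℝ) / 2))
            ⊆ Icc a (1 - a)} := by
  have h1δ : 0 ≤ 1 - δ := by linarith [hδ.2]
  have hF : ∀ t, ε ≤ t → 1 ≤ ENNReal.ofReal (M * t ^ α) := fun t ht =>
    ENNReal.one_le_ofReal.2 (hM ▸ one_le_rpow_neg_mul_rpow hε.1 hα.1.le ht)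
  have hq0 : 0 ≤ M * a ^ α :=
    mul_nonneg (hM ▸ Real.rpow_nonneg hε.1.le _) (Real.rpow_nonneg ha.1.le _)
  have hq : M * a ^ α < 1 / 6 := by
    have hpos := Real.rpow_pos_of_pos ha.1 α
    rw [Real.rpow_neg ha.1.le] at hMa
    calc M * a ^ α < (a ^ α)⁻¹ / 6 * a ^ α := by gcongr
      _ = 1 / 6 := by field_simp
  have hb := tendsto_rpow_atTop_of_base_lt_one (1 - δ) (by linarith [hδ.2]) (by linarith [hδ.1])
  have hsmall₁ := (hb.comp (tendsto_nroot4_atTop.atTop_div_const two_pos)).eventually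
    (gt_mem_nhds hε.1)
  have hsmall₂ := (hb.comp ((tendsto_nroot4_atTop.const_mul_atTop hα.1).atTop_div_const
    two_pos)).eventually (gt_mem_nhds (show (0:ℝ) < 1 / 10 by norm_num))
  obtain ⟨n₀, hn₀⟩ := eventually_atTop.1 (hsmall₁.and hsmall₂)
  refine ⟨n₀, fun n hn => ?_⟩
  obtain ⟨hεn, hr⟩ : (1 - δ) ^ ((nroot4 n : ℝ) / 2) < ε ∧
    (1 - δ) ^ (α * (nroot4 n : ℝ) / 2) < 1 / 10 := hn₀ n hn
  have hεn0 : 0 ≤ (1 - δ) ^ ((nroot4 n : ℝ) / 2) := Real.rpow_nonneg h1δ _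
  refine (ENNReal.ofReal_le_ofReal ?_).trans <| ofReal_one_sub_le_measure_image_subset
    hadm.meas hadm.maps (fun i => (hadm.mono i).monotoneOn) hcyl hclass hclass'
    (by linarith [hε.2]) hF ⟨hεn0, by linarith [hε.2]⟩ _ ⟨ha.1.le, by linarith [ha.2]⟩
    (Real.rpow_nonneg h1δ _) hq0 le_rfl (hA0 n _ ⟨le_rfl, hεn.le⟩) (hA1 n _ ⟨by linarith, le_rfl⟩)
  linarith
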